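/- arXiv:1902.00396 — 5 statements merged into one kernel-verified Lean document; each statement's English description precedes it below -/
import Mathlib

section
/- Let H = (V, E) be a hypergraph on vertex set V = {1, ..., n} (n ≥ 5) whose hyperedges are all sets of three cyclically consecutive vertices {i, i+1, i+2} (indices mod n). Then the edge intersection hypergraph EI(H), whose edges are all intersections e₁ ∩ e₂ of distinct hyperedges e₁, e₂ of H having at least 2 elements, equals the cycle Cₙ, i.e. its edge set is exactly {{i, i+1} : i ∈ V} (indices mod n). -/
/-!
Write each vertex of the hyperedge `{i, i+1, i+2}` as `i + x` with an integer offset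
`0 ≤ x ≤ 2`. A common vertex of the hyperedges at `i` and `j` exhibits `j - i` as a difference
of offsets, an integer in `[-2, 2]`; for `n ≥ 5` such integers are determined by their residues
mod `n`, so two distinct common vertices force `j - i = ±1`. Consecutive hyperedges meet
exactly in an edge `{k, k+1}` of `Cₙ`, and every edge arises this way.
-/

/-- Edge set of the edge intersection hypergraph of a (set-of-hyperedges) hypergraph
on vertex set `ZMod n`. -/
def EIset {n : ℕ} (E : Set (Finset (ZMod n))) : Set (Finset (ZMod n)) :=
  { s | ∃ e₁ ∈ E, ∃ e₂ ∈ E, e₁ ≠ e₂ ∧ s = e₁ ∩ e₂ ∧ 2 ≤ s.card }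

/-- Edge set of the edge intersection hypergraph, for a finite family of hyperedges. -/
def EIsetF {n : ℕ} (E : Finset (Finset (ZMod n))) : Set (Finset (ZMod n)) :=
  { s | ∃ e₁ ∈ E, ∃ e₂ ∈ E, e₁ ≠ e₂ ∧ s = e₁ ∩ e₂ ∧ 2 ≤ s.card }

/-- The edge set of the cycle `Cₙ` on vertex set `ZMod n`. -/
def cycleEdges (n : ℕ) : Set (Finset (ZMod n)) :=
  { s | ∃ i : ZMod n, s = {i, i + 1} }

/-- The number of edges of `Cₙ` contained in the hyperedge `e`. -/
noncomputable def kval {n : ℕ} (e : Finset (ZMod n)) : ℕ :=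
  Set.ncard { s : Finset (ZMod n) | s ∈ cycleEdges n ∧ s ⊆ e }

open Finset

variable {n : ℕ}

lemma Int.eq_of_intCast_zmod_eq {a b : ℤ} (h : (a : ZMod n) = b) (hab : |a - b| < n) : a = b := by
  rw [ZMod.intCast_eq_intCast_iff_dvd_sub] at h
  have := Int.eq_zero_of_abs_lt_dvd h (by rwa [abs_sub_comm])
  omega

def cyclicTriple (i : ZMod n) : Finset (ZMod n) := {i, i + 1, i + 2}

lemma exists_offset_of_mem_cyclicTriple {i a : ZMod n} (h : a ∈ cyclicTriple i) :
    ∃ x : ℤ, (0 ≤ x ∧ x ≤ 2) ∧ a = i + x := by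
  simp only [cyclicTriple, mem_insert, mem_singleton] at h
  rcases h with rfl | rfl | rfl
  · exact ⟨0, by norm_num, by simp⟩
  · exact ⟨1, by norm_num, by simp⟩
  · exact ⟨2, by norm_num, by simp⟩

lemma self_notMem_cyclicTriple_add_one (hn : 4 ≤ n) (i : ZMod n) : i ∉ cyclicTriple (i + 1) := by
  intro h
  obtain ⟨x, hx, hix⟩ := exists_offset_of_mem_cyclicTriple h
  have hcast : ((0 : ℤ) : ZMod n) = ((1 + x : ℤ) : ZMod n) := by
    push_cast
    linear_combination hix
  have := Int.eq_of_intCast_zmod_eq hcast (by rw [abs_lt]; omega)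
  omega

lemma cyclicTriple_inter_cyclicTriple_add_one (hn : 4 ≤ n) (i : ZMod n) :
    cyclicTriple i ∩ cyclicTriple (i + 1) = {i + 1, i + 1 + 1} := by
  refine Subset.antisymm (fun z hz => ?_) ?_
  · rw [mem_inter] at hz
    obtain ⟨p, hp, rfl⟩ := exists_offset_of_mem_cyclicTriple hz.1
    obtain ⟨q, hq, hpq⟩ := exists_offset_of_mem_cyclicTriple hz.2
    have hcast : (p : ZMod n) = ((1 + q : ℤ) : ZMod n) := by
      push_cast
      linear_combination hpq
    have := Int.eq_of_intCast_zmod_eq hcast (by rw [abs_lt]; omega)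
    obtain rfl | rfl : p = 1 ∨ p = 2 := by omega
    · simp
    · simp only [mem_insert, mem_singleton]
      right
      push_cast
      ring
  · simp only [insert_subset_iff, singleton_subset_iff, mem_inter, cyclicTriple, mem_insert,
      mem_singleton]
    refine ⟨⟨by simp, by simp⟩, ⟨Or.inr (Or.inr ?_), by simp⟩⟩
    ring

lemma eq_add_one_or_of_two_le_card_cyclicTriple_inter (hn : 5 ≤ n) {i j : ZMod n} (hij : i ≠ j)
    (h : 2 ≤ #(cyclicTriple i ∩ cyclicTriple j)) : j = i + 1 ∨ i = j + 1 := by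
  obtain ⟨a, ha, b, hb, hab⟩ := one_lt_card.mp h
  rw [mem_inter] at ha hb
  obtain ⟨x, hx, rfl⟩ := exists_offset_of_mem_cyclicTriple ha.1
  obtain ⟨x', hx', hxx'⟩ := exists_offset_of_mem_cyclicTriple ha.2
  obtain ⟨y, hy, rfl⟩ := exists_offset_of_mem_cyclicTriple hb.1
  obtain ⟨y', hy', hyy'⟩ := exists_offset_of_mem_cyclicTriple hb.2
  have hjx : j = i + ((x - x' : ℤ) : ZMod n) := by
    push_cast
    linear_combination -hxx'
  have hjy : j = i + ((y - y' : ℤ) : ZMod n) := by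
    push_cast
    linear_combination -hyy'
  have hshift : x - x' = y - y' :=
    Int.eq_of_intCast_zmod_eq (add_left_cancel (hjx.symm.trans hjy)) (by rw [abs_lt]; omega)
  have hxy : x ≠ y := by
    rintro rfl
    exact hab rfl
  have hshift_ne : x - x' ≠ 0 := by
    intro h0
    rw [h0, Int.cast_zero, add_zero] at hjx
    exact hij hjx.symm
  obtain h1 | h1 : x - x' = 1 ∨ x - x' = -1 := by omega
  · left
    rw [hjx, h1, Int.cast_one]
  · right
    rw [hjx, h1]
    push_cast
    ring

theorem stmt0 (n : ℕ) (hn : 5 ≤ n) (E : Set (Finset (ZMod n)))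
    (hE : E = { e | ∃ i : ZMod n, e = {i, i + 1, i + 2} }) :
    EIset E = cycleEdges n := by
  have hn4 : 4 ≤ n := by omega
  subst hE
  ext s
  constructor
  · rintro ⟨_, ⟨i, rfl⟩, _, ⟨j, rfl⟩, hne, rfl, hcard⟩
    have hij : i ≠ j := by
      rintro rfl
      exact hne rfl
    rcases eq_add_one_or_of_two_le_card_cyclicTriple_inter hn hij hcard with rfl | rfl
    · exact ⟨i + 1, cyclicTriple_inter_cyclicTriple_add_one hn4 i⟩
    · exact ⟨j + 1, by rw [inter_comm]; exact cyclicTriple_inter_cyclicTriple_add_one hn4 j⟩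
  · rintro ⟨k, rfl⟩
    obtain ⟨i, rfl⟩ : ∃ i, k = i + 1 := ⟨k - 1, by ring⟩
    have : Nontrivial (ZMod n) := ZMod.nontrivial_iff.mpr (by omega)
    refine ⟨cyclicTriple i, ⟨i, rfl⟩, cyclicTriple (i + 1), ⟨i + 1, rfl⟩, ?_,
      (cyclicTriple_inter_cyclicTriple_add_one hn4 i).symm, by simp⟩
    intro h
    apply self_notMem_cyclicTriple_add_one hn4 i
    rw [← h]
    simp [cyclicTriple]
end

section
/- Let n ≥ 24 be even and let H = (V, E) be a 6-uniform hypergraph on V = {1,...,n} with EI(H) = Cₙ. If e ∈ E is a hyperedge with k_e = 5 (where k_e counts the number of cycle edges {i, i+1 mod n} contained in e), then e is a set of six cyclically consecutive vertices, i.e. e = {i, i+1, i+2, i+3, i+4, i+5} mod n for some i. -/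
theorem stmt3 (n : ℕ) (hn : 24 ≤ n) (hev : Even n) (E : Set (Finset (ZMod n)))
    (hunif : ∀ e ∈ E, e.card = 6) (hEI : EIset E = cycleEdges n) :
    ∀ e ∈ E, kval e = 5 →
      ∃ i : ZMod n, e = {i, i + 1, i + 2, i + 3, i + 4, i + 5} := by
  intro e he hk
  haveI : NeZero n := ⟨by omega⟩
  have hcard : e.card = 6 := hunif e he
  -- casts of naturals below n are injective
  have hcastinj : ∀ a b : ℕ, a < n → b < n → (a : ZMod n) = (b : ZMod n) → a = b := by
    intro a b ha hb hab
    have := congrArg ZMod.val hab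
    rwa [ZMod.val_cast_of_lt ha, ZMod.val_cast_of_lt hb] at this
  have h2ne : (2 : ZMod n) ≠ 0 := by
    intro h
    have h2 : ((2 : ℕ) : ZMod n) = ((0 : ℕ) : ZMod n) := by exact_mod_cast h
    have := hcastinj 2 0 (by omega) (by omega) h2
    omega
  have hinj : ∀ i j : ZMod n, ({i, i + 1} : Finset (ZMod n)) = {j, j + 1} → i = j := by
    intro i j h
    have hi : i ∈ ({j, j + 1} : Finset (ZMod n)) := by rw [← h]; simp
    have hj : j ∈ ({i, i + 1} : Finset (ZMod n)) := by rw [h]; simp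
    simp only [Finset.mem_insert, Finset.mem_singleton] at hi hj
    rcases hi with h1 | h1
    · exact h1
    · rcases hj with h2 | h2
      · exact h2.symm
      · exfalso
        have h3 : i + 0 = i + 2 := by
          rw [add_zero]; nth_rewrite 1 [h1]; rw [h2]; ring
        exact h2ne ((add_left_cancel h3).symm)
  -- kval as a filter cardinality
  have hkval : kval e = (e.filter fun x => x + 1 ∈ e).card := by
    unfold kval
    have hset : {s : Finset (ZMod n) | s ∈ cycleEdges n ∧ s ⊆ e}
        = ↑((e.filter fun x => x + 1 ∈ e).image fun i => ({i, i + 1} : Finset (ZMod n))) := by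
      ext s
      simp only [Set.mem_setOf_eq, cycleEdges, Finset.coe_image, Set.mem_image,
        Finset.mem_coe, Finset.mem_filter]
      constructor
      · rintro ⟨⟨i, rfl⟩, hsub⟩
        exact ⟨i, ⟨hsub (by simp), hsub (by simp)⟩, rfl⟩
      · rintro ⟨i, ⟨hi, hi1⟩, rfl⟩
        refine ⟨⟨i, rfl⟩, ?_⟩
        intro x hx
        simp only [Finset.mem_insert, Finset.mem_singleton] at hx
        rcases hx with rfl | rfl <;> assumption
    rw [hset, Set.ncard_coe_finset]
    exact Finset.card_image_of_injOn (fun a _ b _ h => hinj a b h)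
  have hk5 : (e.filter fun x => x + 1 ∈ e).card = 5 := by rw [← hkval]; exact hk
  -- the unique element whose successor is outside e
  have hneg : (e.filter fun x => ¬ (x + 1 ∈ e)).card = 1 := by
    have h := Finset.card_filter_add_card_filter_not (s := e) (p := fun x => x + 1 ∈ e)
    have h2 : (Finset.filter (fun a => ¬ (fun x => x + 1 ∈ e) a) e).card
        = (e.filter fun x => ¬ (x + 1 ∈ e)).card := rfl
    omega
  obtain ⟨x₀, hx0⟩ := Finset.card_eq_one.mp hneg
  have hx0mem : x₀ ∈ e := by
    have : x₀ ∈ e.filter fun x => ¬ (x + 1 ∈ e) := by rw [hx0]; simp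
    exact (Finset.mem_filter.mp this).1
  have hx0succ : x₀ + 1 ∉ e := by
    have : x₀ ∈ e.filter fun x => ¬ (x + 1 ∈ e) := by rw [hx0]; simp
    exact (Finset.mem_filter.mp this).2
  have hstep : ∀ z ∈ e, z ≠ x₀ → z + 1 ∈ e := by
    intro z hz hzne
    by_contra h
    have : z ∈ e.filter fun x => ¬ (x + 1 ∈ e) := Finset.mem_filter.mpr ⟨hz, h⟩
    rw [hx0] at this
    exact hzne (Finset.mem_singleton.mp this)
  -- an element with predecessor outside e
  have hmex : ∃ m ∈ e, m - 1 ∉ e := by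
    by_contra h
    push_neg at h
    have hsub : e.image (· - 1) ⊆ e := by
      intro z hz
      simp only [Finset.mem_image] at hz
      obtain ⟨w, hw, rfl⟩ := hz
      exact h w hw
    have hcardim : (e.image (· - 1)).card = e.card :=
      Finset.card_image_of_injective _ (fun a b hab => by
        have := congrArg (· + 1) hab
        simpa using this)
    have heq : e.image (· - 1) = e :=
      Finset.eq_of_subset_of_card_le hsub (le_of_eq hcardim.symm)
    have hx : x₀ ∈ e.image (· - 1) := by rw [heq]; exact hx0mem
    simp only [Finset.mem_image] at hx
    obtain ⟨w, hw, hweq⟩ := hx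
    have : w = x₀ + 1 := by rw [← hweq]; ring
    exact hx0succ (this ▸ hw)
  obtain ⟨m, hme, hm1⟩ := hmex
  -- chain lemma
  have chain : ∀ y : ZMod n, y ∈ e → ∀ k : ℕ, (∀ i : ℕ, i < k → y + (i : ZMod n) ≠ x₀) →
      y + (k : ZMod n) ∈ e := by
    intro y hy k
    induction k with
    | zero => intro _; simpa using hy
    | succ k ih =>
      intro h
      have hk' := ih (fun i hi => h i (by omega))
      have hne : y + (k : ZMod n) ≠ x₀ := h k (by omega)
      have := hstep _ hk' hne
      have heq : y + ((k + 1 : ℕ) : ZMod n) = y + (k : ZMod n) + 1 := by push_cast; ring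
      rwa [heq]
  -- x₀ is not among m, m+1, ..., m+4
  have hL : ∀ j : ℕ, j ≤ 4 → x₀ ≠ m + (j : ZMod n) := by
    intro j hj hx
    -- m + i ∈ e for i ≤ j
    have hchain : ∀ i : ℕ, i ≤ j → m + (i : ZMod n) ∈ e := by
      intro i hi
      apply chain m hme
      intro i' hi' heq
      have : (i' : ZMod n) = (j : ZMod n) := by
        have := heq.trans hx
        exact add_left_cancel this
      have := hcastinj i' j (by omega) (by omega) this
      omega
    set S : Finset (ZMod n) := (Finset.range (j + 1)).image (fun i : ℕ => m + (i : ZMod n))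
      with hSdef
    have hScard : S.card = j + 1 := by
      rw [hSdef, Finset.card_image_of_injOn, Finset.card_range]
      intro a ha b hb hab
      simp only [Finset.mem_coe, Finset.mem_range] at ha hb
      exact hcastinj a b (by omega) (by omega) (add_left_cancel hab)
    have hSsub : S ⊆ e := by
      intro z hz
      rw [hSdef] at hz
      simp only [Finset.mem_image, Finset.mem_range] at hz
      obtain ⟨i, hi, rfl⟩ := hz
      exact hchain i (by omega)
    obtain ⟨y, hye, hyS⟩ : ∃ y ∈ e, y ∉ S := by
      by_contra hno
      push_neg at hno
      have hes : e ⊆ S := hno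
      have := Finset.card_le_card hes
      omega
    have hyne : ∀ i : ℕ, i ≤ j → y ≠ m + (i : ZMod n) := by
      intro i hi hyeq
      apply hyS
      rw [hSdef]
      exact Finset.mem_image.mpr ⟨i, Finset.mem_range.mpr (by omega), hyeq.symm⟩
    set k : ℕ := (x₀ - y).val with hkdef
    have hkn : k < n := ZMod.val_lt _
    have hx0y : x₀ ≠ y := by
      intro h
      exact hyne j le_rfl (by rw [← h, hx])
    have hkpos : 1 ≤ k := by
      rcases Nat.eq_zero_or_pos k with h | h
      · exfalso
        have : x₀ - y = 0 := by
          have := (ZMod.val_eq_zero (x₀ - y)).mp h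
          exact this
        exact hx0y (by linear_combination this)
      · exact h
    have hyk : y + (k : ZMod n) = x₀ := by
      rw [hkdef]
      have : ((x₀ - y).val : ZMod n) = x₀ - y := by
        simp [ZMod.natCast_val, ZMod.cast_id]
      rw [this]; ring
    have hychain : ∀ i : ℕ, i ≤ k → y + (i : ZMod n) ∈ e := by
      intro i hi
      apply chain y hye
      intro i' hi' heq
      have : (i' : ZMod n) = (k : ZMod n) := add_left_cancel (heq.trans hyk.symm)
      have := hcastinj i' k (by omega) hkn this
      omega
    rcases le_or_gt k j with hkj | hkj
    · -- y = m + (j - k)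
      have : y = m + ((j - k : ℕ) : ZMod n) := by
        have h1 : y + (k : ZMod n) = m + ((j - k : ℕ) : ZMod n) + (k : ZMod n) := by
          rw [hyk, hx]
          have : ((j - k : ℕ) : ZMod n) + (k : ZMod n) = (j : ZMod n) := by
            rw [← Nat.cast_add]
            congr 1
            omega
          rw [add_assoc, this]
        exact add_right_cancel h1
      exact hyne (j - k) (by omega) this
    · -- m - 1 ∈ e, contradiction
      have hmy : m = y + ((k - j : ℕ) : ZMod n) := by
        have h1 : y + (k : ZMod n) = m + (j : ZMod n) := by rw [hyk, hx]
        have h2 : ((k - j : ℕ) : ZMod n) + (j : ZMod n) = (k : ZMod n) := by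
          rw [← Nat.cast_add]; congr 1; omega
        have h3 : y + ((k - j : ℕ) : ZMod n) + (j : ZMod n) = m + (j : ZMod n) := by
          rw [add_assoc, h2, h1]
        exact (add_right_cancel h3).symm
      have hd : m - 1 = y + ((k - j - 1 : ℕ) : ZMod n) := by
        rw [hmy]
        have hnat : (k - j : ℕ) = (k - j - 1) + 1 := by omega
        have : ((k - j : ℕ) : ZMod n) = ((k - j - 1 : ℕ) : ZMod n) + 1 := by
          rw [hnat]; push_cast; ring
        rw [this]; ring
      have : m - 1 ∈ e := by
        rw [hd]
        exact hychain (k - j - 1) (by omega)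
      exact hm1 this
  -- now the full chain m, ..., m+5 lies in e
  have hfull : ∀ i : ℕ, i ≤ 5 → m + (i : ZMod n) ∈ e := by
    intro i hi
    apply chain m hme
    intro i' hi' heq
    exact hL i' (by omega) heq.symm
  -- assemble the answer
  refine ⟨m, ?_⟩
  set T : Finset (ZMod n) := (Finset.range 6).image (fun i : ℕ => m + (i : ZMod n)) with hTdef
  have hTcard : T.card = 6 := by
    rw [hTdef, Finset.card_image_of_injOn, Finset.card_range]
    intro a ha b hb hab
    simp only [Finset.mem_coe, Finset.mem_range] at ha hb
    exact hcastinj a b (by omega) (by omega) (add_left_cancel hab)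
  have hTsub : T ⊆ e := by
    intro z hz
    rw [hTdef] at hz
    simp only [Finset.mem_image, Finset.mem_range] at hz
    obtain ⟨i, hi, rfl⟩ := hz
    exact hfull i (by omega)
  have heT : T = e := Finset.eq_of_subset_of_card_le hTsub (by omega)
  rw [← heT, hTdef]
  rw [show Finset.range 6 = ({0, 1, 2, 3, 4, 5} : Finset ℕ) from by decide]
  simp only [Finset.image_insert, Finset.image_singleton]
  push_cast
  norm_num
end

section
/- Let n ≥ 24 be even and let H = (V, E) be a 6-uniform hypergraph on V = {1,...,n} such that EI(H) = Cₙ. Then |E| ≥ n/2. -/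
theorem stmt5 (n : ℕ) (hn : 24 ≤ n) (hev : Even n) (E : Finset (Finset (ZMod n)))
    (hunif : ∀ e ∈ E, e.card = 6) (hEI : EIsetF E = cycleEdges n) :
    n ≤ 2 * E.card := by
  haveI : NeZero n := ⟨by omega⟩
  -- every cycle edge is an exact intersection of two distinct hyperedges
  have hedge : ∀ i : ZMod n, ∃ e ∈ E, ∃ f ∈ E, e ≠ f ∧ ({i, i + 1} : Finset (ZMod n)) = e ∩ f := by
    intro i
    have : ({i, i + 1} : Finset (ZMod n)) ∈ EIsetF E := by
      rw [hEI]; exact ⟨i, rfl⟩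
    obtain ⟨e, he, f, hf, hef, hs, -⟩ := this
    exact ⟨e, he, f, hf, hef, hs⟩
  have h2ne : (2 : ZMod n) ≠ 0 := by
    intro h
    have hd : n ∣ 2 := (ZMod.natCast_eq_zero_iff 2 n).mp (by exact_mod_cast h)
    exact absurd (Nat.le_of_dvd (by norm_num) hd) (by omega)
  -- every vertex is in at least 3 hyperedges
  have hdeg : ∀ i : ZMod n, 3 ≤ (E.filter (fun e => i ∈ e)).card := by
    intro i
    obtain ⟨e, he, f, hf, hef, hs1⟩ := hedge (i - 1)
    obtain ⟨g, hg, h, hh, hgh, hs2⟩ := hedge i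
    have hs1' : ({i - 1, i} : Finset (ZMod n)) = e ∩ f := by
      simpa using hs1
    have hie : i ∈ e ∧ i ∈ f := by
      have : i ∈ e ∩ f := by rw [← hs1']; simp
      simpa using this
    have hig : i ∈ g ∧ i ∈ h := by
      have : i ∈ g ∩ h := by rw [← hs2]; simp
      simpa using this
    have hne : e ∩ f ≠ g ∩ h := by
      rw [← hs1', ← hs2]
      intro hcon
      have : (i - 1 : ZMod n) ∈ ({i, i + 1} : Finset (ZMod n)) := by
        rw [← hcon]; simp
      simp only [Finset.mem_insert, Finset.mem_singleton] at this
      rcases this with h1 | h1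
      · exact h2ne (by linear_combination (-2 : ZMod n) * h1)
      · exact h2ne (by linear_combination -h1)
    -- among e,f,g,h there are at least 3 distinct sets
    have hsub : ∀ S : Finset (Finset (ZMod n)), S ⊆ E.filter (fun e => i ∈ e) →
        S.card ≤ (E.filter (fun e => i ∈ e)).card := fun S hS => Finset.card_le_card hS
    have heF : e ∈ E.filter (fun e => i ∈ e) := Finset.mem_filter.mpr ⟨he, hie.1⟩
    have hfF : f ∈ E.filter (fun e => i ∈ e) := Finset.mem_filter.mpr ⟨hf, hie.2⟩
    have hgF : g ∈ E.filter (fun e => i ∈ e) := Finset.mem_filter.mpr ⟨hg, hig.1⟩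
    have hhF : h ∈ E.filter (fun e => i ∈ e) := Finset.mem_filter.mpr ⟨hh, hig.2⟩
    by_cases hgef : g = e ∨ g = f
    · by_cases hhef : h = e ∨ h = f
      · exfalso
        rcases hgef with h1 | h1 <;> rcases hhef with h2 | h2
        · exact hgh (h1.trans h2.symm)
        · exact hne (by rw [h1, h2])
        · exact hne (by rw [h1, h2, Finset.inter_comm])
        · exact hgh (h1.trans h2.symm)
      · push_neg at hhef
        have : ({e, f, h} : Finset (Finset (ZMod n))).card = 3 := by
          rw [Finset.card_insert_of_notMem (by simp [hef, Ne.symm hhef.1]),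
            Finset.card_insert_of_notMem (by simp [Ne.symm hhef.2])]
          simp
        calc 3 = ({e, f, h} : Finset (Finset (ZMod n))).card := this.symm
          _ ≤ _ := hsub _ (by
            intro x hx
            simp only [Finset.mem_insert, Finset.mem_singleton] at hx
            rcases hx with rfl | rfl | rfl <;> assumption)
    · push_neg at hgef
      have : ({e, f, g} : Finset (Finset (ZMod n))).card = 3 := by
        rw [Finset.card_insert_of_notMem (by simp [hef, Ne.symm hgef.1]),
          Finset.card_insert_of_notMem (by simp [Ne.symm hgef.2])]
        simp
      calc 3 = ({e, f, g} : Finset (Finset (ZMod n))).card := this.symm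
        _ ≤ _ := hsub _ (by
          intro x hx
          simp only [Finset.mem_insert, Finset.mem_singleton] at hx
          rcases hx with rfl | rfl | rfl <;> assumption)
  -- double counting
  have hcount : ∑ i : ZMod n, (E.filter (fun e => i ∈ e)).card = ∑ e ∈ E, e.card := by
    simp only [Finset.card_filter]
    rw [Finset.sum_comm]
    refine Finset.sum_congr rfl fun e _ => ?_
    rw [← Finset.card_filter]
    congr 1
    ext x
    simp
  have h6 : ∑ e ∈ E, e.card = 6 * E.card := by
    rw [Finset.sum_congr rfl hunif, Finset.sum_const, smul_eq_mul, mul_comm]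
  have h3 : 3 * n ≤ ∑ i : ZMod n, (E.filter (fun e => i ∈ e)).card := by
    calc 3 * n = ∑ _i : ZMod n, 3 := by
          rw [Finset.sum_const, smul_eq_mul, Finset.card_univ, ZMod.card, mul_comm]
      _ ≤ _ := Finset.sum_le_sum fun i _ => hdeg i
  omega
end

section
/- For every even n ≥ 24 there exists a 6-uniform, 3-regular hypergraph H = (V, E) with |V| = n, |E| = n/2, and EI(H) = Cₙ. -/
namespace EI6

/-- The base pattern of a hyperedge. -/
def B : Finset ℕ := {0, 1, 2, 3, 7, 8}

lemma memB_le : ∀ k ∈ B, k ≤ 8 := by decide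

variable {n : ℕ}

lemma castInj (hn : 24 ≤ n) {a b : ℕ} (ha : a < n) (hb : b < n) :
    ((a : ZMod n) = (b : ZMod n)) ↔ a = b := by
  rw [ZMod.natCast_eq_natCast_iff, Nat.ModEq, Nat.mod_eq_of_lt ha, Nat.mod_eq_of_lt hb]

/-- The hyperedge with base point `x`. -/
def g (n : ℕ) (x : ZMod n) : Finset (ZMod n) := B.image (fun k : ℕ => x + (k : ZMod n))

lemma mem_g {x v : ZMod n} : v ∈ g n x ↔ ∃ k ∈ B, v = x + (k : ZMod n) := by
  simp [g, eq_comm]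

lemma g_card (hn : 24 ≤ n) (x : ZMod n) : (g n x).card = 6 := by
  rw [g, Finset.card_image_of_injOn]
  · rfl
  · intro k hk l hl h
    have h' : (k : ZMod n) = (l : ZMod n) := by exact add_left_cancel h
    exact (castInj hn (by have := memB_le k hk; omega) (by have := memB_le l hl; omega)).mp h'

lemma g_inj (hn : 24 ≤ n) : Function.Injective (g n) := by
  intro x y h
  have hx : x ∈ g n y := by
    rw [← h]; exact mem_g.mpr ⟨0, by decide, by simp⟩
  have hy : y ∈ g n x := by
    rw [h]; exact mem_g.mpr ⟨0, by decide, by simp⟩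
  obtain ⟨l, hl, hxl⟩ := mem_g.mp hx
  obtain ⟨k, hk, hyk⟩ := mem_g.mp hy
  have h1 : x + ((k + l : ℕ) : ZMod n) = x + ((0 : ℕ) : ZMod n) := by
    push_cast
    linear_combination - hxl - hyk
  have h2 : k + l = 0 :=
    (castInj hn (by have := memB_le k hk; have := memB_le l hl; omega) (by omega)).mp
      (add_left_cancel h1)
  have hl0 : l = 0 := by omega
  subst hl0
  simpa using hxl

lemma pair_aux2 : ∀ k ∈ B, ∀ l ∈ B, k = l + 2 → (k = 2 ∧ l = 0) ∨ (k = 3 ∧ l = 1) := by decide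

lemma pair_aux6 : ∀ k ∈ B, ∀ l ∈ B, k = l + 6 → (k = 7 ∧ l = 1) ∨ (k = 8 ∧ l = 2) := by decide

lemma pair2 (hn : 24 ≤ n) (x : ZMod n) : g n x ∩ g n (x + 2) = {x + 2, x + 3} := by
  ext c
  simp only [Finset.mem_inter, mem_g, Finset.mem_insert, Finset.mem_singleton]
  constructor
  · rintro ⟨⟨k, hk, rfl⟩, ⟨l, hl, hc⟩⟩
    have h1 : ((k : ℕ) : ZMod n) = ((l + 2 : ℕ) : ZMod n) := by
      push_cast
      linear_combination hc
    have h2 : k = l + 2 :=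
      (castInj hn (by have := memB_le k hk; omega) (by have := memB_le l hl; omega)).mp h1
    rcases pair_aux2 k hk l hl h2 with ⟨hk2, -⟩ | ⟨hk3, -⟩
    · left; subst hk2; push_cast; ring
    · right; subst hk3; push_cast; ring
  · rintro (rfl | rfl)
    · exact ⟨⟨2, by decide, by push_cast; ring⟩, ⟨0, by decide, by push_cast; ring⟩⟩
    · exact ⟨⟨3, by decide, by push_cast; ring⟩, ⟨1, by decide, by push_cast; ring⟩⟩

lemma pair6 (hn : 24 ≤ n) (x : ZMod n) : g n x ∩ g n (x + 6) = {x + 7, x + 8} := by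
  ext c
  simp only [Finset.mem_inter, mem_g, Finset.mem_insert, Finset.mem_singleton]
  constructor
  · rintro ⟨⟨k, hk, rfl⟩, ⟨l, hl, hc⟩⟩
    have h1 : ((k : ℕ) : ZMod n) = ((l + 6 : ℕ) : ZMod n) := by
      push_cast
      linear_combination hc
    have h2 : k = l + 6 :=
      (castInj hn (by have := memB_le k hk; omega) (by have := memB_le l hl; omega)).mp h1
    rcases pair_aux6 k hk l hl h2 with ⟨hk2, -⟩ | ⟨hk3, -⟩
    · left; subst hk2; push_cast; ring
    · right; subst hk3; push_cast; ring
  · rintro (rfl | rfl)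
    · exact ⟨⟨7, by decide, by push_cast; ring⟩, ⟨1, by decide, by push_cast; ring⟩⟩
    · exact ⟨⟨8, by decide, by push_cast; ring⟩, ⟨2, by decide, by push_cast; ring⟩⟩

lemma keyM : ∀ k ∈ B, ∀ l ∈ B, ∀ k' ∈ B, ∀ l' ∈ B,
    k + l' = k' + l → k % 2 = l % 2 → k ≠ l → k ≠ k' →
    (k = l + 2 ∨ l = k + 2 ∨ k = l + 6 ∨ l = k + 6) := by decide

/-- Reduction mod 2. -/
def par (hd : 2 ∣ n) : ZMod n →+* ZMod 2 := ZMod.castHom hd (ZMod 2)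

/-- The even elements of `ZMod n`. -/
def evens (n : ℕ) : Finset (ZMod n) :=
  (Finset.range (n / 2)).image (fun j => ((2 * j : ℕ) : ZMod n))

lemma mem_evens (hn : 24 ≤ n) (hd : 2 ∣ n) {x : ZMod n} :
    x ∈ evens n ↔ par hd x = 0 := by
  haveI : NeZero n := ⟨by omega⟩
  constructor
  · intro hx
    obtain ⟨j, hj, rfl⟩ := Finset.mem_image.mp hx
    rw [map_natCast]
    exact (ZMod.natCast_eq_zero_iff _ _).mpr ⟨j, rfl⟩
  · intro hx
    have hval : ((x.val : ℕ) : ZMod n) = x := ZMod.natCast_rightInverse x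
    have h2 : ((x.val : ℕ) : ZMod 2) = 0 := by
      rw [← map_natCast (par hd), hval]; exact hx
    obtain ⟨j, hj⟩ := (ZMod.natCast_eq_zero_iff _ _).mp h2
    refine Finset.mem_image.mpr ⟨j, Finset.mem_range.mpr ?_, ?_⟩
    · have := ZMod.val_lt x; omega
    · rw [← hj, hval]

lemma evens_card (hn : 24 ≤ n) : (evens n).card = n / 2 := by
  rw [evens, Finset.card_image_of_injOn, Finset.card_range]
  intro j hj j' hj'
  simp only [Finset.mem_coe, Finset.mem_range] at hj hj'
  intro h
  have := (castInj hn (by omega) (by omega)).mp h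
  omega

end EI6

theorem stmt6 (n : ℕ) (hn : 24 ≤ n) (hev : Even n) :
    ∃ E : Finset (Finset (ZMod n)),
      (∀ e ∈ E, e.card = 6) ∧
      2 * E.card = n ∧
      (∀ v : ZMod n, (E.filter (fun e => v ∈ e)).card = 3) ∧
      EIsetF E = cycleEdges n := by
  classical
  have hd : 2 ∣ n := hev.two_dvd
  have hone : (1 : ZMod n) ≠ 0 := by
    intro h
    have h' : ((1 : ℕ) : ZMod n) = ((0 : ℕ) : ZMod n) := by push_cast; exact h
    have := (EI6.castInj hn (by omega) (by omega)).mp h'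
    omega
  have htwo : (2 : ZMod n) ≠ 0 := by
    intro h
    have h' : ((2 : ℕ) : ZMod n) = ((0 : ℕ) : ZMod n) := by push_cast; exact h
    have := (EI6.castInj hn (by omega) (by omega)).mp h'
    omega
  have hsix : (6 : ZMod n) ≠ 0 := by
    intro h
    have h' : ((6 : ℕ) : ZMod n) = ((0 : ℕ) : ZMod n) := by push_cast; exact h
    have := (EI6.castInj hn (by omega) (by omega)).mp h'
    omega
  refine ⟨(EI6.evens n).image (EI6.g n), ?_, ?_, ?_, ?_⟩
  · -- 6-uniform
    intro e he
    obtain ⟨x, -, rfl⟩ := Finset.mem_image.mp he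
    exact EI6.g_card hn x
  · -- number of hyperedges
    rw [Finset.card_image_of_injective _ (EI6.g_inj hn), EI6.evens_card hn]
    omega
  · -- 3-regular
    intro v
    have h1 : ((EI6.evens n).image (EI6.g n)).filter (fun e => v ∈ e)
        = ((EI6.evens n).filter (fun x => v ∈ EI6.g n x)).image (EI6.g n) := by
      ext e
      simp only [Finset.mem_filter, Finset.mem_image]
      constructor
      · rintro ⟨⟨x, hx, rfl⟩, hv⟩; exact ⟨x, ⟨hx, hv⟩, rfl⟩
      · rintro ⟨x, ⟨hx, hv⟩, rfl⟩; exact ⟨⟨x, hx, rfl⟩, hv⟩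
    rw [h1, Finset.card_image_of_injective _ (EI6.g_inj hn)]
    have h2 : (EI6.evens n).filter (fun x => v ∈ EI6.g n x)
        = (EI6.B.filter (fun k : ℕ => ((k : ℕ) : ZMod 2) = EI6.par hd v)).image
            (fun k : ℕ => v - (k : ZMod n)) := by
      ext x
      simp only [Finset.mem_filter, Finset.mem_image, EI6.mem_evens hn hd, EI6.mem_g]
      constructor
      · rintro ⟨hx0, k, hk, hv⟩
        refine ⟨k, ⟨hk, ?_⟩, ?_⟩
        · rw [hv, map_add, hx0, map_natCast, zero_add]
        · rw [hv]; ring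
      · rintro ⟨k, ⟨hk, hpar⟩, rfl⟩
        refine ⟨?_, ⟨k, hk, by ring⟩⟩
        rw [map_sub, map_natCast, hpar, sub_self]
    rw [h2, Finset.card_image_of_injOn]
    · have h01 : ∀ a : ZMod 2, a = 0 ∨ a = 1 := by decide
      rcases h01 (EI6.par hd v) with h | h <;> rw [h] <;> decide
    · intro k hk k' hk' h
      simp only [Finset.coe_filter, Set.mem_setOf_eq] at hk hk'
      have h' : ((k : ℕ) : ZMod n) = ((k' : ℕ) : ZMod n) := by
        have := sub_right_inj.mp h
        exact this
      exact (EI6.castInj hn (by have := EI6.memB_le k hk.1; omega)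
        (by have := EI6.memB_le k' hk'.1; omega)).mp h'
  · -- EI = cycle
    apply Set.ext
    intro s
    constructor
    · rintro ⟨e₁, he₁, e₂, he₂, hne, rfl, hcard⟩
      obtain ⟨x, hx, rfl⟩ := Finset.mem_image.mp he₁
      obtain ⟨y, hy, rfl⟩ := Finset.mem_image.mp he₂
      rw [EI6.mem_evens hn hd] at hx hy
      have hxy : x ≠ y := fun h => hne (by rw [h])
      obtain ⟨a, ha, b, hb, hab⟩ := Finset.one_lt_card.mp hcard
      rw [Finset.mem_inter, EI6.mem_g, EI6.mem_g] at ha hb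
      obtain ⟨⟨k, hkB, hak⟩, ⟨l, hlB, hal⟩⟩ := ha
      obtain ⟨⟨k', hk'B, hbk⟩, ⟨l', hl'B, hbl⟩⟩ := hb
      have hsum : k + l' = k' + l := by
        have h1 : x + ((k + l' : ℕ) : ZMod n) = x + ((k' + l : ℕ) : ZMod n) := by
          push_cast
          linear_combination (hbk - hbl) - (hak - hal)
        exact (EI6.castInj hn
          (by have := EI6.memB_le k hkB; have := EI6.memB_le l' hl'B; omega)
          (by have := EI6.memB_le k' hk'B; have := EI6.memB_le l hlB; omega)).mp
          (add_left_cancel h1)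
      have hpar : k % 2 = l % 2 := by
        have e1 : EI6.par hd a = ((k : ℕ) : ZMod 2) := by
          rw [hak, map_add, hx, map_natCast, zero_add]
        have e2 : EI6.par hd a = ((l : ℕ) : ZMod 2) := by
          rw [hal, map_add, hy, map_natCast, zero_add]
        have : ((k : ℕ) : ZMod 2) = ((l : ℕ) : ZMod 2) := by rw [← e1, e2]
        exact (ZMod.natCast_eq_natCast_iff _ _ _).mp this
      have hkl : k ≠ l := by
        intro h
        apply hxy
        subst h
        exact add_right_cancel (hak.symm.trans hal)
      have hkk' : k ≠ k' := by
        intro h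
        apply hab
        rw [hak, hbk, h]
      rcases EI6.keyM k hkB l hlB k' hk'B l' hl'B hsum hpar hkl hkk' with h | h | h | h
      · -- k = l + 2, so y = x + 2, intersection is {x+2, x+3}
        have hyx : y = x + 2 := by
          subst h
          push_cast at hak
          linear_combination hak - hal
        subst hyx
        refine ⟨x + 2, ?_⟩
        rw [EI6.pair2 hn x, show (x + 3 : ZMod n) = (x + 2) + 1 from by ring]
      · -- l = k + 2, so x = y + 2, intersection is {y+2, y+3}
        have hxy2 : x = y + 2 := by
          subst h
          push_cast at hal
          linear_combination hal - hak
        subst hxy2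
        refine ⟨y + 2, ?_⟩
        rw [Finset.inter_comm, EI6.pair2 hn y,
          show (y + 3 : ZMod n) = (y + 2) + 1 from by ring]
      · -- k = l + 6, so y = x + 6, intersection is {x+7, x+8}
        have hyx : y = x + 6 := by
          subst h
          push_cast at hak
          linear_combination hak - hal
        subst hyx
        refine ⟨x + 7, ?_⟩
        rw [EI6.pair6 hn x, show (x + 8 : ZMod n) = (x + 7) + 1 from by ring]
      · -- l = k + 6, so x = y + 6, intersection is {y+7, y+8}
        have hxy2 : x = y + 6 := by
          subst h
          push_cast at hal
          linear_combination hal - hak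
        subst hxy2
        refine ⟨y + 7, ?_⟩
        rw [Finset.inter_comm, EI6.pair6 hn y,
          show (y + 8 : ZMod n) = (y + 7) + 1 from by ring]
    · rintro ⟨i, rfl⟩
      have h01 : ∀ a : ZMod 2, a = 0 ∨ a = 1 := by decide
      rcases h01 (EI6.par hd i) with hpi | hpi
      · -- i even : {i, i+1} = g (i-2) ∩ g i
        obtain ⟨x, hx0, rfl⟩ : ∃ x : ZMod n, EI6.par hd x = 0 ∧ i = x + 2 := by
          refine ⟨i - 2, ?_, by ring⟩
          rw [map_sub, hpi, map_ofNat]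
          decide
        refine ⟨EI6.g n x, ?_, EI6.g n (x + 2), ?_, ?_, ?_, ?_⟩
        · exact Finset.mem_image_of_mem _ ((EI6.mem_evens hn hd).mpr hx0)
        · refine Finset.mem_image_of_mem _ ((EI6.mem_evens hn hd).mpr ?_)
          rw [map_add, hx0, map_ofNat, zero_add]
          decide
        · intro h
          have := EI6.g_inj hn h
          exact htwo (left_eq_add.mp this)
        · rw [EI6.pair2 hn x, show (x + 3 : ZMod n) = (x + 2) + 1 from by ring]
        · rw [Finset.card_pair (by
            intro h
            exact hone (left_eq_add.mp h))]
      · -- i odd : {i, i+1} = g (i-7) ∩ g (i-1)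
        obtain ⟨x, hx0, rfl⟩ : ∃ x : ZMod n, EI6.par hd x = 0 ∧ i = x + 7 := by
          refine ⟨i - 7, ?_, by ring⟩
          rw [map_sub, hpi, map_ofNat]
          decide
        refine ⟨EI6.g n x, ?_, EI6.g n (x + 6), ?_, ?_, ?_, ?_⟩
        · exact Finset.mem_image_of_mem _ ((EI6.mem_evens hn hd).mpr hx0)
        · refine Finset.mem_image_of_mem _ ((EI6.mem_evens hn hd).mpr ?_)
          rw [map_add, hx0, map_ofNat, zero_add]
          decide
        · intro h
          have := EI6.g_inj hn h
          exact hsix (left_eq_add.mp this)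
        · rw [EI6.pair6 hn x, show (x + 8 : ZMod n) = (x + 7) + 1 from by ring]
        · rw [Finset.card_pair (by
            intro h
            exact hone (left_eq_add.mp h))]
end

section
/- For every odd n ≥ 25 there exists a 3-regular hypergraph H = (V, E) with |V| = n, |E| = (n+1)/2, EI(H) = Cₙ, in which exactly one hyperedge has cardinality 3 and all other hyperedges have cardinality 6. -/
namespace S7

def fm (m a : ℕ) : ℕ :=
  if a % 3 = 1 then a / 3
  else if a % 3 = 0 then (m + 1) / 3 + a / 3
  else (m + 1) / 3 + (m + 2) / 3 + a / 3

def finvm (m y : ℕ) : ℕ :=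
  if y < (m + 1) / 3 then 3 * y + 1
  else if y < (m + 1) / 3 + (m + 2) / 3 then 3 * (y - (m + 1) / 3)
  else 3 * (y - (m + 1) / 3 - (m + 2) / 3) + 2

def pim (m x : ℕ) : ℕ :=
  if x = 2 * m then x else if x < m then m + fm m x else finvm m (x - m)

def near (n x y : ℕ) : Prop := (x ≤ y + 2 ∧ y ≤ x + 2) ∨ y + n ≤ x + 2 ∨ x + n ≤ y + 2

def adj (n x y : ℕ) : Prop := (x ≤ y + 1 ∧ y ≤ x + 1) ∨ y + n ≤ x + 1 ∨ x + n ≤ y + 1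

instance (n x y : ℕ) : Decidable (near n x y) := by unfold near; infer_instance
instance (n x y : ℕ) : Decidable (adj n x y) := by unfold adj; infer_instance

lemma fm_spec (m a : ℕ) :
    (a % 3 = 1 ∧ fm m a = a / 3) ∨ (a % 3 = 0 ∧ fm m a = (m + 1) / 3 + a / 3) ∨
      (a % 3 = 2 ∧ fm m a = (m + 1) / 3 + (m + 2) / 3 + a / 3) := by
  unfold fm; split_ifs <;> omega

lemma fm_lt {m a : ℕ} (h : a < m) (hm : 3 ≤ m) : fm m a < m := by
  have := fm_spec m a; omega

lemma finv_fm {m a : ℕ} (h : a < m) : finvm m (fm m a) = a := by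
  have := fm_spec m a; unfold finvm; split_ifs <;> omega

lemma fm_finv {m y : ℕ} (h : y < m) (hm : 3 ≤ m) :
    finvm m y < m ∧ fm m (finvm m y) = y := by
  unfold finvm fm; split_ifs <;> omega

set_option maxHeartbeats 3200000 in
lemma key_BB {m n a b u v u' v' : ℕ} (hm : 12 ≤ m) (hn : n = 2 * m + 1)
    (ha : a < m) (hb : b < m) (hab : a ≠ b)
    (hu : u = a ∨ u = m + fm m a) (hv : v = b ∨ v = m + fm m b)
    (hu' : u' = a ∨ u' = m + fm m a) (hv' : v' = b ∨ v' = m + fm m b)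
    (h1 : near n u v) (h2 : near n u' v') : u = u' ∧ v = v' := by
  have sa := fm_spec m a; have sb := fm_spec m b
  unfold near at h1 h2
  rcases hu with rfl | rfl <;> rcases hv with rfl | rfl <;>
    rcases hu' with rfl | rfl <;> rcases hv' with rfl | rfl <;> omega

lemma key_BS {m n a u u' : ℕ} (hm : 12 ≤ m) (hn : n = 2 * m + 1) (ha : a < m)
    (hu : u = a ∨ u = m + fm m a) (hu' : u' = a ∨ u' = m + fm m a)
    (h1 : near n u (2 * m)) (h2 : near n u' (2 * m)) : u = u' := by
  have sa := fm_spec m a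
  unfold near at h1 h2; omega

lemma near_symm {n x y : ℕ} (h : near n x y) : near n y x := by
  unfold near at *; omega

lemma near_self (n x : ℕ) : near n x x := by unfold near; omega

lemma adj_to_near {n x y : ℕ} (h : adj n x y) : near n x y := by
  unfold adj at h; unfold near; omega

lemma adj_self (n x : ℕ) : adj n x x := by unfold adj; omega

lemma adj_near {n x y q : ℕ} (hn : 25 ≤ n) (hx : x < n) (hy : y < n) (hq : q < n)
    (h1 : adj n x q) (h2 : adj n y q) : near n x y := by
  unfold adj at h1 h2; unfold near; omega

lemma pim_eq_lt {m x : ℕ} (hm : 12 ≤ m) (h : x < m) : pim m x = m + fm m x := by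
  unfold pim; split_ifs <;> omega

lemma pim_eq_mid {m x : ℕ} (h1 : m ≤ x) (h2 : x < 2 * m) : pim m x = finvm m (x - m) := by
  unfold pim; split_ifs <;> omega

lemma pim_2m (m : ℕ) : pim m (2 * m) = 2 * m := by unfold pim; simp

lemma pim_lt {m n x : ℕ} (hm : 12 ≤ m) (hn : n = 2 * m + 1) (hx : x < n) : pim m x < n := by
  unfold pim; split_ifs with h1 h2
  · omega
  · have := fm_lt (m := m) (a := x) (by omega) (by omega); omega
  · have := fm_finv (m := m) (y := x - m) (by omega) (by omega); omega

lemma pim_pim {m n x : ℕ} (hm : 12 ≤ m) (hn : n = 2 * m + 1) (hx : x < n) :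
    pim m (pim m x) = x := by
  rcases Nat.lt_or_ge x m with h | h
  · have h2 : fm m x < m := fm_lt h (by omega)
    rw [pim_eq_lt hm h, pim_eq_mid (by omega) (by omega), Nat.add_sub_cancel_left]
    exact finv_fm h
  · by_cases hx2 : x = 2 * m
    · rw [hx2, pim_2m, pim_2m]
    · obtain ⟨hlt, hfv⟩ := fm_finv (m := m) (y := x - m) (by omega) (by omega)
      rw [pim_eq_mid h (by omega), pim_eq_lt hm hlt, hfv]
      omega

lemma pair_far {m n x : ℕ} (hm : 12 ≤ m) (hn : n = 2 * m + 1) (hx : x < n)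
    (hx2 : x ≠ 2 * m) : ¬ near n x (pim m x) := by
  rcases Nat.lt_or_ge x m with h | h
  · rw [pim_eq_lt hm h]
    have := fm_spec m x; unfold near; omega
  · obtain ⟨hlt, hfv⟩ := fm_finv (m := m) (y := x - m) (by omega) (by omega)
    rw [pim_eq_mid h (by omega)]
    have := fm_spec m (finvm m (x - m))
    unfold near; omega

lemma canon {m n x : ℕ} (hm : 12 ≤ m) (hn : n = 2 * m + 1) (hx : x < n) :
    ∃ a, (a < m ∨ a = 2 * m) ∧
      ((x = a ∧ pim m x = pim m a) ∨ (x = pim m a ∧ pim m x = a)) := by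
  rcases Nat.lt_or_ge x m with h | h
  · exact ⟨x, Or.inl h, Or.inl ⟨rfl, rfl⟩⟩
  · by_cases hx2 : x = 2 * m
    · exact ⟨x, Or.inr hx2, Or.inl ⟨rfl, rfl⟩⟩
    · refine ⟨pim m x, Or.inl ?_, Or.inr ⟨(pim_pim hm hn hx).symm, rfl⟩⟩
      rw [pim_eq_mid h (by omega)]
      exact (fm_finv (m := m) (y := x - m) (by omega) (by omega)).1

lemma key_can {m n a b u v u' v' : ℕ} (hm : 12 ≤ m) (hn : n = 2 * m + 1)
    (ha : a < m ∨ a = 2 * m) (hb : b < m ∨ b = 2 * m) (hab : a ≠ b)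
    (hu : u = a ∨ u = pim m a) (hv : v = b ∨ v = pim m b)
    (hu' : u' = a ∨ u' = pim m a) (hv' : v' = b ∨ v' = pim m b)
    (h1 : near n u v) (h2 : near n u' v') : u = u' ∧ v = v' := by
  rcases ha with ha | ha <;> rcases hb with hb | hb
  · rw [pim_eq_lt hm ha] at hu hu'; rw [pim_eq_lt hm hb] at hv hv'
    exact key_BB hm hn ha hb hab hu hv hu' hv' h1 h2
  · subst hb; rw [pim_2m] at hv hv'
    have hv2 : v = 2 * m := by tauto
    have hv2' : v' = 2 * m := by tauto
    subst hv2; subst hv2'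
    rw [pim_eq_lt hm ha] at hu hu'
    exact ⟨key_BS hm hn ha hu hu' h1 h2, rfl⟩
  · subst ha; rw [pim_2m] at hu hu'
    have hu2 : u = 2 * m := by tauto
    have hu2' : u' = 2 * m := by tauto
    subst hu2; subst hu2'
    rw [pim_eq_lt hm hb] at hv hv'
    exact ⟨rfl, key_BS hm hn hb hv hv' (near_symm h1) (near_symm h2)⟩
  · omega

lemma key_gen {m n x y u v u' v' : ℕ} (hm : 12 ≤ m) (hn : n = 2 * m + 1)
    (hx : x < n) (hy : y < n) (h1 : y ≠ x) (h2 : y ≠ pim m x)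
    (hu : u = x ∨ u = pim m x) (hv : v = y ∨ v = pim m y)
    (hu' : u' = x ∨ u' = pim m x) (hv' : v' = y ∨ v' = pim m y)
    (n1 : near n u v) (n2 : near n u' v') : u = u' ∧ v = v' := by
  obtain ⟨a, ha, hca⟩ := canon hm hn hx
  obtain ⟨b, hb, hcb⟩ := canon hm hn hy
  have hab : a ≠ b := by
    rintro rfl
    rcases hca with ⟨e1, e2⟩ | ⟨e1, e2⟩ <;> rcases hcb with ⟨e3, e4⟩ | ⟨e3, e4⟩ <;> omega
  have hu2 : u = a ∨ u = pim m a := by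
    rcases hca with ⟨e1, e2⟩ | ⟨e1, e2⟩ <;> rcases hu with rfl | rfl <;> omega
  have hv2 : v = b ∨ v = pim m b := by
    rcases hcb with ⟨e1, e2⟩ | ⟨e1, e2⟩ <;> rcases hv with rfl | rfl <;> omega
  have hu2' : u' = a ∨ u' = pim m a := by
    rcases hca with ⟨e1, e2⟩ | ⟨e1, e2⟩ <;> rcases hu' with rfl | rfl <;> omega
  have hv2' : v' = b ∨ v' = pim m b := by
    rcases hcb with ⟨e1, e2⟩ | ⟨e1, e2⟩ <;> rcases hv' with rfl | rfl <;> omega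
  exact key_can hm hn ha hb hab hu2 hv2 hu2' hv2' n1 n2

end S7

namespace S7

def NB (n x : ℕ) : Finset ℕ :=
  if x = 0 then {n - 1, 0, 1} else if x = n - 1 then {n - 2, n - 1, 0} else {x - 1, x, x + 1}

def cyE (n u : ℕ) : Finset ℕ := if u + 1 = n then {u, 0} else {u, u + 1}

def CC (n : ℕ) (S : Finset ℕ) : Finset (ZMod n) := S.image (Nat.cast)

def natEdge (n m x : ℕ) : Finset ℕ := NB n x ∪ NB n (pim m x)

def ownE (n m x : ℕ) : Finset (ZMod n) := CC n (natEdge n m x)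

def EE (n m : ℕ) : Finset (Finset (ZMod n)) :=
  insert (ownE n m (2 * m)) ((Finset.range m).image (ownE n m))

lemma mem_NB {n x q : ℕ} (hn : 25 ≤ n) (hx : x < n) :
    q ∈ NB n x ↔ q < n ∧ adj n x q := by
  unfold NB adj
  split_ifs with h1 h2 <;>
    simp only [Finset.mem_insert, Finset.mem_singleton] <;> omega

lemma NB_bdd {n x : ℕ} (hn : 25 ≤ n) (hx : x < n) : ∀ s ∈ NB n x, s < n :=
  fun s hs => ((mem_NB hn hx).mp hs).1

lemma mem_cyE {n u q : ℕ} (hu : u < n) :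
    q ∈ cyE n u ↔ (q = u ∨ (u + 1 = n ∧ q = 0) ∨ (u + 1 ≠ n ∧ q = u + 1)) := by
  unfold cyE
  split_ifs with h <;> simp only [Finset.mem_insert, Finset.mem_singleton] <;> omega

lemma cyE_bdd {n u : ℕ} (hn : 25 ≤ n) (hu : u < n) : ∀ s ∈ cyE n u, s < n := by
  intro s hs; rw [mem_cyE hu] at hs; omega

lemma cyE_card {n u : ℕ} (hn : 25 ≤ n) (hu : u < n) : (cyE n u).card = 2 := by
  unfold cyE; split_ifs with h <;> exact Finset.card_pair (by omega)

lemma NB_card {n x : ℕ} (hn : 25 ≤ n) (hx : x < n) : (NB n x).card = 3 := by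
  unfold NB
  split_ifs with h1 h2
  · exact Finset.card_eq_three.mpr ⟨_, _, _, by omega, by omega, by omega, rfl⟩
  · exact Finset.card_eq_three.mpr ⟨_, _, _, by omega, by omega, by omega, rfl⟩
  · exact Finset.card_eq_three.mpr ⟨_, _, _, by omega, by omega, by omega, rfl⟩

lemma NB_disj {n x y : ℕ} (hn : 25 ≤ n) (hx : x < n) (hy : y < n)
    (h : ¬ near n x y) : NB n x ∩ NB n y = ∅ := by
  rw [Finset.eq_empty_iff_forall_notMem]
  intro q hq
  rw [Finset.mem_inter, mem_NB hn hx, mem_NB hn hy] at hq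
  exact h (adj_near hn hx hy hq.1.1 hq.1.2 hq.2.2)

lemma NB_inter_succ {n u w : ℕ} (hn : 25 ≤ n) (hu : u < n) (hw : w < n)
    (h : u + 1 = w ∨ (u + 1 = n ∧ w = 0)) : NB n u ∩ NB n w = cyE n u := by
  ext q
  rw [Finset.mem_inter, mem_NB hn hu, mem_NB hn hw, mem_cyE hu]
  unfold adj; omega

lemma inter_cases {n u w : ℕ} (hn : 25 ≤ n) (hu : u < n) (hw : w < n)
    (hnear : near n u w) (hne : u ≠ w) :
    NB n u ∩ NB n w = cyE n u ∨ NB n u ∩ NB n w = cyE n w ∨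
      (NB n u ∩ NB n w).card ≤ 1 := by
  by_cases h1 : u + 1 = w ∨ (u + 1 = n ∧ w = 0)
  · exact Or.inl (NB_inter_succ hn hu hw h1)
  · by_cases h2 : w + 1 = u ∨ (w + 1 = n ∧ u = 0)
    · exact Or.inr (Or.inl (by rw [Finset.inter_comm]; exact NB_inter_succ hn hw hu h2))
    · refine Or.inr (Or.inr (Finset.card_le_one.mpr ?_))
      intro a ha b hb
      rw [Finset.mem_inter, mem_NB hn hu, mem_NB hn hw] at ha hb
      unfold near at hnear
      unfold adj at ha hb
      omega

end S7

namespace S7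

section ZModLayer

variable {n : ℕ} [NeZero n]

lemma CC_mem {S : Finset ℕ} (hb : ∀ s ∈ S, s < n) {v : ZMod n} :
    v ∈ CC n S ↔ v.val ∈ S := by
  unfold CC
  simp only [Finset.mem_image]
  constructor
  · rintro ⟨s, hs, rfl⟩; rwa [ZMod.val_cast_of_lt (hb s hs)]
  · intro h; exact ⟨v.val, h, ZMod.natCast_rightInverse v⟩

lemma CC_card {S : Finset ℕ} (hb : ∀ s ∈ S, s < n) : (CC n S).card = S.card := by
  refine Finset.card_image_of_injOn ?_
  intro a ha b hb' h
  rw [← ZMod.val_cast_of_lt (hb a ha), ← ZMod.val_cast_of_lt (hb b hb'), h]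

lemma CC_inter {S T : Finset ℕ} (hbS : ∀ s ∈ S, s < n) (hbT : ∀ s ∈ T, s < n) :
    CC n S ∩ CC n T = CC n (S ∩ T) := by
  ext v
  rw [Finset.mem_inter, CC_mem hbS, CC_mem hbT,
    CC_mem (fun s hs => hbS s (Finset.mem_of_mem_inter_left hs)), Finset.mem_inter]

lemma CC_inj {S T : Finset ℕ} (hbS : ∀ s ∈ S, s < n) (hbT : ∀ s ∈ T, s < n)
    (h : CC n S = CC n T) : S = T := by
  ext q
  constructor <;> intro hq
  · have h1 : ((q : ZMod n)) ∈ CC n S := by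
      rw [CC_mem hbS, ZMod.val_cast_of_lt (hbS q hq)]; exact hq
    rw [h, CC_mem hbT, ZMod.val_cast_of_lt (hbS q hq)] at h1; exact h1
  · have h1 : ((q : ZMod n)) ∈ CC n T := by
      rw [CC_mem hbT, ZMod.val_cast_of_lt (hbT q hq)]; exact hq
    rw [← h, CC_mem hbS, ZMod.val_cast_of_lt (hbT q hq)] at h1; exact h1

lemma CC_cyE {u : ℕ} (hu : u < n) :
    CC n (cyE n u) = {(u : ZMod n), (u : ZMod n) + 1} := by
  unfold cyE CC
  split_ifs with h
  · rw [Finset.image_insert, Finset.image_singleton]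
    have h2 : ((u : ZMod n)) + 1 = ((0 : ℕ) : ZMod n) := by
      rw [← Nat.cast_one, ← Nat.cast_add, h, ZMod.natCast_self, Nat.cast_zero]
    rw [h2]
  · rw [Finset.image_insert, Finset.image_singleton, Nat.cast_add, Nat.cast_one]

end ZModLayer

section Edges

variable {n m : ℕ}

lemma natEdge_bdd (hm : 12 ≤ m) (hn : n = 2 * m + 1) {x : ℕ} (hx : x < n) :
    ∀ s ∈ natEdge n m x, s < n := by
  intro s hs
  rcases Finset.mem_union.mp hs with h | h
  · exact NB_bdd (by omega) hx s h
  · exact NB_bdd (by omega) (pim_lt hm hn hx) s h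

lemma natEdge_pim (hm : 12 ≤ m) (hn : n = 2 * m + 1) {x : ℕ} (hx : x < n) :
    natEdge n m (pim m x) = natEdge n m x := by
  unfold natEdge
  rw [pim_pim hm hn hx, Finset.union_comm]

lemma ownE_pim (hm : 12 ≤ m) (hn : n = 2 * m + 1) {x : ℕ} (hx : x < n) :
    ownE n m (pim m x) = ownE n m x := by
  unfold ownE; rw [natEdge_pim hm hn hx]

lemma mem_ownE [NeZero n] (hm : 12 ≤ m) (hn : n = 2 * m + 1) {x : ℕ} (hx : x < n)
    {v : ZMod n} :
    v ∈ ownE n m x ↔ (adj n x v.val ∨ adj n (pim m x) v.val) := by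
  unfold ownE
  rw [CC_mem (natEdge_bdd hm hn hx)]
  unfold natEdge
  rw [Finset.mem_union,
    mem_NB (by omega) hx, mem_NB (by omega) (pim_lt hm hn hx)]
  have hv : v.val < n := ZMod.val_lt v
  tauto

lemma ownE_mem_EE (hm : 12 ≤ m) (hn : n = 2 * m + 1) {x : ℕ} (hx : x < n) :
    ownE n m x ∈ EE n m := by
  unfold EE
  rcases Nat.lt_or_ge x m with h | h
  · exact Finset.mem_insert_of_mem (Finset.mem_image.mpr ⟨x, Finset.mem_range.mpr h, rfl⟩)
  · by_cases hx2 : x = 2 * m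
    · rw [hx2]; exact Finset.mem_insert_self _ _
    · have hpl : pim m x < m := by
        rw [pim_eq_mid h (by omega)]
        exact (fm_finv (m := m) (y := x - m) (by omega) (by omega)).1
      rw [← ownE_pim hm hn hx]
      exact Finset.mem_insert_of_mem
        (Finset.mem_image.mpr ⟨pim m x, Finset.mem_range.mpr hpl, rfl⟩)

lemma mem_EE_iff (hm : 12 ≤ m) {e : Finset (ZMod n)} :
    e ∈ EE n m ↔ ∃ x, (x < m ∨ x = 2 * m) ∧ e = ownE n m x := by
  unfold EE
  simp only [Finset.mem_insert, Finset.mem_image, Finset.mem_range]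
  constructor
  · rintro (rfl | ⟨x, hx, rfl⟩)
    · exact ⟨2 * m, Or.inr rfl, rfl⟩
    · exact ⟨x, Or.inl hx, rfl⟩
  · rintro ⟨x, hx | rfl, rfl⟩
    · exact Or.inr ⟨x, hx, rfl⟩
    · exact Or.inl rfl

lemma ownE_inj [NeZero n] (hm : 12 ≤ m) (hn : n = 2 * m + 1) {x y : ℕ}
    (hx : x < n) (hy : y < n) (h : ownE n m x = ownE n m y) :
    y = x ∨ y = pim m x := by
  by_contra hc
  push_neg at hc
  obtain ⟨h1, h2⟩ := hc
  have heq : natEdge n m x = natEdge n m y :=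
    CC_inj (natEdge_bdd hm hn hx) (natEdge_bdd hm hn hy) h
  have hmem : ∀ w, w ∈ natEdge n m x → (near n w y ∨ near n w (pim m y)) := by
    intro w hw
    rw [heq] at hw
    rcases Finset.mem_union.mp hw with h' | h'
    · exact Or.inl (near_symm (adj_to_near ((mem_NB (by omega) hy).mp h').2))
    · exact Or.inr (near_symm (adj_to_near
        ((mem_NB (by omega) (pim_lt hm hn hy)).mp h').2))
  have hmem2 : ∀ w, w ∈ natEdge n m y → (near n x w ∨ near n (pim m x) w) := by
    intro w hw
    rw [← heq] at hw
    rcases Finset.mem_union.mp hw with h' | h'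
    · exact Or.inl (adj_to_near ((mem_NB (by omega) hx).mp h').2)
    · exact Or.inr (adj_to_near ((mem_NB (by omega) (pim_lt hm hn hx)).mp h').2)
  by_cases hx2 : x = 2 * m
  · -- use y-side : y ≠ 2m
    have hy2 : y ≠ 2 * m := by omega
    have hyin : y ∈ natEdge n m y := Finset.mem_union_left _
      ((mem_NB (by omega) hy).mpr ⟨hy, adj_self n y⟩)
    have hpyin : pim m y ∈ natEdge n m y := Finset.mem_union_right _
      ((mem_NB (by omega) (pim_lt hm hn hy)).mpr ⟨pim_lt hm hn hy, adj_self n _⟩)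
    obtain hA | hA := hmem2 y hyin <;> obtain hB | hB := hmem2 (pim m y) hpyin
    · have := key_gen hm hn hx hy h1 h2 (Or.inl rfl) (Or.inl rfl)
        (Or.inl rfl) (Or.inr rfl) hA hB
      exact pair_far hm hn hy hy2 (by rw [← this.2]; exact near_self n y)
    · have := key_gen hm hn hx hy h1 h2 (Or.inl rfl) (Or.inl rfl)
        (Or.inr rfl) (Or.inr rfl) hA hB
      exact pair_far hm hn hy hy2 (by rw [← this.2]; exact near_self n y)
    · have := key_gen hm hn hx hy h1 h2 (Or.inr rfl) (Or.inl rfl)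
        (Or.inl rfl) (Or.inr rfl) hA hB
      exact pair_far hm hn hy hy2 (by rw [← this.2]; exact near_self n y)
    · have := key_gen hm hn hx hy h1 h2 (Or.inr rfl) (Or.inl rfl)
        (Or.inr rfl) (Or.inr rfl) hA hB
      exact pair_far hm hn hy hy2 (by rw [← this.2]; exact near_self n y)
  · have hxin : x ∈ natEdge n m x := Finset.mem_union_left _
      ((mem_NB (by omega) hx).mpr ⟨hx, adj_self n x⟩)
    have hpxin : pim m x ∈ natEdge n m x := Finset.mem_union_right _
      ((mem_NB (by omega) (pim_lt hm hn hx)).mpr ⟨pim_lt hm hn hx, adj_self n _⟩)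
    obtain hA | hA := hmem x hxin <;> obtain hB | hB := hmem (pim m x) hpxin
    · have := key_gen hm hn hx hy h1 h2 (Or.inl rfl) (Or.inl rfl)
        (Or.inr rfl) (Or.inl rfl) hA hB
      exact pair_far hm hn hx hx2 (by rw [← this.1]; exact near_self n x)
    · have := key_gen hm hn hx hy h1 h2 (Or.inl rfl) (Or.inl rfl)
        (Or.inr rfl) (Or.inr rfl) hA hB
      exact pair_far hm hn hx hx2 (by rw [← this.1]; exact near_self n x)
    · have := key_gen hm hn hx hy h1 h2 (Or.inl rfl) (Or.inr rfl)
        (Or.inr rfl) (Or.inl rfl) hA hB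
      exact pair_far hm hn hx hx2 (by rw [← this.1]; exact near_self n x)
    · have := key_gen hm hn hx hy h1 h2 (Or.inl rfl) (Or.inr rfl)
        (Or.inr rfl) (Or.inr rfl) hA hB
      exact pair_far hm hn hx hx2 (by rw [← this.1]; exact near_self n x)

end Edges

end S7

namespace S7

section Cards

variable {n m : ℕ}

lemma natEdge_card6 (hm : 12 ≤ m) (hn : n = 2 * m + 1) {x : ℕ} (hx : x < n)
    (hx2 : x ≠ 2 * m) : (natEdge n m x).card = 6 := by
  unfold natEdge
  rw [Finset.card_union_of_disjoint (Finset.disjoint_iff_inter_eq_empty.mpr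
    (NB_disj (by omega) hx (pim_lt hm hn hx) (pair_far hm hn hx hx2))),
    NB_card (by omega) hx, NB_card (by omega) (pim_lt hm hn hx)]

lemma natEdge_2m (hn : n = 2 * m + 1) : natEdge n m (2 * m) = NB n (2 * m) := by
  unfold natEdge; rw [pim_2m, Finset.union_self]

lemma ownE_card6 [NeZero n] (hm : 12 ≤ m) (hn : n = 2 * m + 1) {x : ℕ} (hx : x < n)
    (hx2 : x ≠ 2 * m) : (ownE n m x).card = 6 := by
  unfold ownE
  rw [CC_card (natEdge_bdd hm hn hx), natEdge_card6 hm hn hx hx2]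

lemma ownE_card3 [NeZero n] (hm : 12 ≤ m) (hn : n = 2 * m + 1) :
    (ownE n m (2 * m)).card = 3 := by
  unfold ownE
  rw [CC_card (natEdge_bdd hm hn (by omega)), natEdge_2m hn, NB_card (by omega) (by omega)]

lemma own2m_ne [NeZero n] (hm : 12 ≤ m) (hn : n = 2 * m + 1) {a : ℕ} (ha : a < m) :
    ownE n m (2 * m) ≠ ownE n m a := by
  intro h
  have h1 := ownE_card3 (n := n) hm hn
  rw [h, ownE_card6 hm hn (by omega) (by omega)] at h1
  omega

lemma EE_card [NeZero n] (hm : 12 ≤ m) (hn : n = 2 * m + 1) : (EE n m).card = m + 1 := by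
  unfold EE
  rw [Finset.card_insert_of_notMem, Finset.card_image_of_injOn, Finset.card_range]
  · intro a ha b hb h
    rw [Finset.coe_range, Set.mem_Iio] at ha hb
    rcases ownE_inj hm hn (by omega) (by omega) h with h' | h'
    · omega
    · rw [pim_eq_lt hm ha] at h'; omega
  · intro hmem
    obtain ⟨a, ha, h⟩ := Finset.mem_image.mp hmem
    exact own2m_ne hm hn (Finset.mem_range.mp ha) h.symm

lemma filter3 [NeZero n] (hm : 12 ≤ m) (hn : n = 2 * m + 1) :
    (EE n m).filter (fun e => e.card = 3) = {ownE n m (2 * m)} := by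
  ext e
  simp only [Finset.mem_filter, Finset.mem_singleton]
  constructor
  · rintro ⟨he, hc⟩
    obtain ⟨x, hx | rfl, rfl⟩ := (mem_EE_iff hm).mp he
    · rw [ownE_card6 hm hn (by omega) (by omega)] at hc; omega
    · rfl
  · rintro rfl
    exact ⟨ownE_mem_EE hm hn (by omega), ownE_card3 hm hn⟩

lemma EE_cards [NeZero n] (hm : 12 ≤ m) (hn : n = 2 * m + 1) :
    ∀ e ∈ EE n m, e.card = 3 ∨ e.card = 6 := by
  intro e he
  obtain ⟨x, hx | rfl, rfl⟩ := (mem_EE_iff hm).mp he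
  · exact Or.inr (ownE_card6 hm hn (by omega) (by omega))
  · exact Or.inl (ownE_card3 hm hn)

lemma reg [NeZero n] (hm : 12 ≤ m) (hn : n = 2 * m + 1) (v : ZMod n) :
    ((EE n m).filter (fun e => v ∈ e)).card = 3 := by
  have hqn : v.val < n := ZMod.val_lt v
  set q := v.val with hqd
  set l := if q = 0 then n - 1 else q - 1 with hl
  set r := if q + 1 = n then 0 else q + 1 with hr
  have hln : l < n := by rw [hl]; split_ifs <;> omega
  have hrn : r < n := by rw [hr]; split_ifs <;> omega
  have hal : adj n l q := by rw [hl]; unfold adj; split_ifs <;> omega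
  have haq : adj n q q := adj_self n q
  have har : adj n r q := by rw [hr]; unfold adj; split_ifs <;> omega
  have hfilter : (EE n m).filter (fun e => v ∈ e) =
      {ownE n m l, ownE n m q, ownE n m r} := by
    ext e
    simp only [Finset.mem_filter, Finset.mem_insert, Finset.mem_singleton]
    constructor
    · rintro ⟨he, hv⟩
      obtain ⟨x, hxc, rfl⟩ := (mem_EE_iff hm).mp he
      have hxn : x < n := by omega
      rcases (mem_ownE hm hn hxn).mp hv with ha | ha
      · have : x = l ∨ x = q ∨ x = r := by
          rw [hl, hr]; unfold adj at ha; split_ifs <;> omega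
        rcases this with rfl | rfl | rfl <;> tauto
      · have hpn : pim m x < n := pim_lt hm hn hxn
        have : pim m x = l ∨ pim m x = q ∨ pim m x = r := by
          rw [hl, hr]; unfold adj at ha; split_ifs <;> omega
        have he2 : ownE n m x = ownE n m (pim m x) := (ownE_pim hm hn hxn).symm
        rcases this with h' | h' | h' <;> rw [he2, h'] <;> tauto
    · have hmem : ∀ x, x < n → adj n x q → v ∈ ownE n m x := by
        intro x hx hadj
        exact (mem_ownE hm hn hx).mpr (Or.inl hadj)
      rintro (rfl | rfl | rfl)
      · exact ⟨ownE_mem_EE hm hn hln, hmem l hln hal⟩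
      · exact ⟨ownE_mem_EE hm hn hqn, hmem q hqn haq⟩
      · exact ⟨ownE_mem_EE hm hn hrn, hmem r hrn har⟩
  rw [hfilter]
  -- distinctness
  have hne : ∀ x y : ℕ, x < n → y < n → x ≠ y → near n x y →
      ownE n m x ≠ ownE n m y := by
    intro x y hx hy hxy hnear h
    rcases ownE_inj hm hn hx hy h with h' | h'
    · exact hxy h'.symm
    · by_cases hx2 : x = 2 * m
      · rw [hx2, pim_2m] at h'; omega
      · exact pair_far hm hn hx hx2 (by rw [← h']; exact hnear)
  have hlq : l ≠ q := by rw [hl]; split_ifs <;> omega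
  have hlr : l ≠ r := by rw [hl, hr]; split_ifs <;> omega
  have hqr : q ≠ r := by rw [hr]; split_ifs <;> omega
  have nlq : near n l q := adj_to_near hal
  have nlr : near n l r := by rw [hl, hr]; unfold near; split_ifs <;> omega
  have nqr : near n q r := near_symm (adj_to_near har)
  rw [Finset.card_insert_of_notMem, Finset.card_insert_of_notMem,
    Finset.card_singleton]
  · simp only [Finset.mem_singleton]
    exact hne q r hqn hrn hqr nqr
  · simp only [Finset.mem_insert, Finset.mem_singleton]
    push_neg
    exact ⟨hne l q hln hqn hlq nlq, hne l r hln hrn hlr nlr⟩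

end Cards

end S7
namespace S7

section EI

variable {n m : ℕ}

lemma inter_eq_of_near (hm : 12 ≤ m) (hn : n = 2 * m + 1) {x y : ℕ}
    (hx : x < n) (hy : y < n) (h1 : y ≠ x) (h2 : y ≠ pim m x)
    (hnear : near n x y) :
    natEdge n m x ∩ natEdge n m y = NB n x ∩ NB n y := by
  have hpx : pim m x < n := pim_lt hm hn hx
  have hpy : pim m y < n := pim_lt hm hn hy
  ext q
  unfold natEdge
  rw [Finset.mem_inter, Finset.mem_inter, Finset.mem_union, Finset.mem_union,
    mem_NB (by omega) hx, mem_NB (by omega) hy, mem_NB (by omega) hpx,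
    mem_NB (by omega) hpy]
  constructor
  · rintro ⟨hA | hA, hB | hB⟩
    · exact ⟨hA, hB⟩
    · have hn2 : near n x (pim m y) := adj_near (by omega) hx hpy hA.1 hA.2 hB.2
      have := key_gen hm hn hx hy h1 h2 (Or.inl rfl) (Or.inl rfl)
        (Or.inl rfl) (Or.inr rfl) hnear hn2
      rw [← this.2] at hB
      exact ⟨hA, hB⟩
    · have hn2 : near n (pim m x) y := adj_near (by omega) hpx hy hA.1 hA.2 hB.2
      have := key_gen hm hn hx hy h1 h2 (Or.inl rfl) (Or.inl rfl)
        (Or.inr rfl) (Or.inl rfl) hnear hn2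
      rw [← this.1] at hA
      exact ⟨hA, hB⟩
    · have hn2 : near n (pim m x) (pim m y) := adj_near (by omega) hpx hpy hA.1 hA.2 hB.2
      have := key_gen hm hn hx hy h1 h2 (Or.inl rfl) (Or.inl rfl)
        (Or.inr rfl) (Or.inr rfl) hnear hn2
      rw [← this.1] at hA
      rw [← this.2] at hB
      exact ⟨hA, hB⟩
  · rintro ⟨hA, hB⟩
    exact ⟨Or.inl hA, Or.inl hB⟩

lemma inter_empty (hm : 12 ≤ m) (hn : n = 2 * m + 1) {x y : ℕ}
    (hx : x < n) (hy : y < n)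
    (c1 : ¬ near n x y) (c2 : ¬ near n x (pim m y))
    (c3 : ¬ near n (pim m x) y) (c4 : ¬ near n (pim m x) (pim m y)) :
    natEdge n m x ∩ natEdge n m y = ∅ := by
  have hpx : pim m x < n := pim_lt hm hn hx
  have hpy : pim m y < n := pim_lt hm hn hy
  rw [Finset.eq_empty_iff_forall_notMem]
  intro q hq
  unfold natEdge at hq
  rw [Finset.mem_inter, Finset.mem_union, Finset.mem_union,
    mem_NB (by omega) hx, mem_NB (by omega) hy, mem_NB (by omega) hpx,
    mem_NB (by omega) hpy] at hq
  obtain ⟨hA | hA, hB | hB⟩ := hq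
  · exact c1 (adj_near (by omega) hx hy hA.1 hA.2 hB.2)
  · exact c2 (adj_near (by omega) hx hpy hA.1 hA.2 hB.2)
  · exact c3 (adj_near (by omega) hpx hy hA.1 hA.2 hB.2)
  · exact c4 (adj_near (by omega) hpx hpy hA.1 hA.2 hB.2)

lemma cyE_mem_cycleEdges [NeZero n] {u : ℕ} (hu : u < n) :
    CC n (cyE n u) ∈ cycleEdges n :=
  ⟨(u : ZMod n), CC_cyE hu⟩

lemma inter_to_cycle [NeZero n] (hm : 12 ≤ m) (hn : n = 2 * m + 1) {u w : ℕ}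
    (hu : u < n) (hw : w < n) (hnear : near n u w) (hne : u ≠ w)
    (hcard : 2 ≤ (CC n (NB n u ∩ NB n w)).card) :
    CC n (NB n u ∩ NB n w) ∈ cycleEdges n := by
  have hbd : ∀ s ∈ NB n u ∩ NB n w, s < n :=
    fun s hs => NB_bdd (by omega) hu s (Finset.mem_of_mem_inter_left hs)
  rcases inter_cases (by omega) hu hw hnear hne with h | h | h
  · rw [h]; exact cyE_mem_cycleEdges hu
  · rw [h]; exact cyE_mem_cycleEdges hw
  · rw [CC_card hbd] at hcard; omega

lemma EI_eq [NeZero n] (hm : 12 ≤ m) (hn : n = 2 * m + 1) :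
    EIsetF (EE n m) = cycleEdges n := by
  apply Set.Subset.antisymm
  · rintro s ⟨e₁, he₁, e₂, he₂, hne, rfl, hcard⟩
    obtain ⟨x, hxc, rfl⟩ := (mem_EE_iff hm).mp he₁
    obtain ⟨y, hyc, rfl⟩ := (mem_EE_iff hm).mp he₂
    have hxn : x < n := by omega
    have hyn : y < n := by omega
    have hpx : pim m x < n := pim_lt hm hn hxn
    have hpy : pim m y < n := pim_lt hm hn hyn
    have h1 : y ≠ x := fun h => hne (by rw [h])
    have h2 : y ≠ pim m x := fun h => hne (by rw [h, ownE_pim hm hn hxn])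
    have h1' : x ≠ pim m y := fun h => h2 (by rw [h, pim_pim hm hn hyn])
    have hinter : ownE n m x ∩ ownE n m y = CC n (natEdge n m x ∩ natEdge n m y) :=
      CC_inter (natEdge_bdd hm hn hxn) (natEdge_bdd hm hn hyn)
    rw [hinter] at hcard ⊢
    by_cases c1 : near n x y
    · rw [inter_eq_of_near hm hn hxn hyn h1 h2 c1] at hcard ⊢
      exact inter_to_cycle hm hn hxn hyn c1 h1.symm hcard
    · by_cases c2 : near n x (pim m y)
      · have e2' : natEdge n m y = natEdge n m (pim m y) := (natEdge_pim hm hn hyn).symm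
        rw [e2'] at hcard ⊢
        have k1 : pim m y ≠ x := fun h => h1' h.symm
        have k2 : pim m y ≠ pim m x := fun h =>
          h1 (by rw [← pim_pim hm hn hyn, h, pim_pim hm hn hxn])
        rw [inter_eq_of_near hm hn hxn hpy k1 k2 c2] at hcard ⊢
        exact inter_to_cycle hm hn hxn hpy c2 (fun h => k1 h.symm) hcard
      · by_cases c3 : near n (pim m x) y
        · have e1' : natEdge n m x = natEdge n m (pim m x) := (natEdge_pim hm hn hxn).symm
          rw [e1'] at hcard ⊢
          have k2 : y ≠ pim m (pim m x) := by rw [pim_pim hm hn hxn]; exact h1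
          rw [inter_eq_of_near hm hn hpx hyn h2 k2 c3] at hcard ⊢
          exact inter_to_cycle hm hn hpx hyn c3 (fun h => h2 h.symm) hcard
        · by_cases c4 : near n (pim m x) (pim m y)
          · have e1' : natEdge n m x = natEdge n m (pim m x) := (natEdge_pim hm hn hxn).symm
            have e2' : natEdge n m y = natEdge n m (pim m y) := (natEdge_pim hm hn hyn).symm
            rw [e1', e2'] at hcard ⊢
            have k1 : pim m y ≠ pim m x := fun h =>
              h1 (by rw [← pim_pim hm hn hyn, h, pim_pim hm hn hxn])
            have k2 : pim m y ≠ pim m (pim m x) := by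
              rw [pim_pim hm hn hxn]; exact fun h => h1' h.symm
            rw [inter_eq_of_near hm hn hpx hpy k1 k2 c4] at hcard ⊢
            exact inter_to_cycle hm hn hpx hpy c4 (fun h => k1 h.symm) hcard
          · rw [inter_empty hm hn hxn hyn c1 c2 c3 c4] at hcard
            unfold CC at hcard
            simp at hcard
  · rintro s ⟨i, rfl⟩
    haveI : Fact (1 < n) := ⟨by omega⟩
    have hxn : i.val < n := ZMod.val_lt i
    set x := i.val with hx
    set sx := if x + 1 = n then 0 else x + 1 with hsx
    have hsxn : sx < n := by rw [hsx]; split_ifs <;> omega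
    have hsucc : x + 1 = sx ∨ (x + 1 = n ∧ sx = 0) := by
      rw [hsx]; split_ifs <;> omega
    have hnear : near n x sx := by rw [hsx]; unfold near; split_ifs <;> omega
    have hne : sx ≠ x := by rw [hsx]; split_ifs <;> omega
    have hne2 : sx ≠ pim m x := by
      intro h
      by_cases hx2 : x = 2 * m
      · rw [hx2, pim_2m, ← hx2] at h; exact hne h
      · exact pair_far hm hn hxn hx2 (by rw [← h]; exact hnear)
    refine ⟨ownE n m x, ownE_mem_EE hm hn hxn, ownE n m sx, ownE_mem_EE hm hn hsxn,
      ?_, ?_, ?_⟩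
    · intro h
      rcases ownE_inj hm hn hxn hsxn h with h' | h'
      · exact hne h'
      · exact hne2 h'
    · have hinter : ownE n m x ∩ ownE n m sx =
          CC n (natEdge n m x ∩ natEdge n m sx) :=
        CC_inter (natEdge_bdd hm hn hxn) (natEdge_bdd hm hn hsxn)
      rw [hinter, inter_eq_of_near hm hn hxn hsxn hne hne2 hnear,
        NB_inter_succ (by omega) hxn hsxn hsucc, CC_cyE hxn]
      have : ((x : ℕ) : ZMod n) = i := ZMod.natCast_rightInverse i
      rw [this]
    · rw [Finset.card_insert_of_notMem (by
        simp only [Finset.mem_singleton]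
        intro h
        exact one_ne_zero (left_eq_add.mp h)), Finset.card_singleton]

end EI

end S7

theorem stmt7 (n : ℕ) (hn : 25 ≤ n) (hodd : Odd n) :
    ∃ E : Finset (Finset (ZMod n)),
      2 * E.card = n + 1 ∧
      (∀ v : ZMod n, (E.filter (fun e => v ∈ e)).card = 3) ∧
      (E.filter (fun e => e.card = 3)).card = 1 ∧
      (∀ e ∈ E, e.card = 3 ∨ e.card = 6) ∧
      EIsetF E = cycleEdges n := by
  obtain ⟨k, hk⟩ := hodd
  have hnn : n = 2 * k + 1 := by omega
  have hm12 : 12 ≤ k := by omega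
  haveI : NeZero n := ⟨by omega⟩
  refine ⟨S7.EE n k, ?_, S7.reg hm12 hnn, ?_, S7.EE_cards hm12 hnn, S7.EI_eq hm12 hnn⟩
  · rw [S7.EE_card hm12 hnn]; omega
  · rw [S7.filter3 hm12 hnn]; exact Finset.card_singleton _
end
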